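/- Let f be an entire function of order ρ with 0 < ρ < 1. Then f has infinitely many zeros, i.e., the set {w ∈ ℂ : f(w) = 0} is infinite. -/

import Mathlib

open Filter

/-- The maximum modulus `M_f(r) = sup_{|w| = r} |f w|`. -/
noncomputable def maxModulus (f : ℂ → ℂ) (r : ℝ) : ℝ :=
  sSup ((fun w => ‖f w‖) '' Metric.sphere (0 : ℂ) r)

/-- The order of an entire function,
`ρ = limsup_{r → ∞} (log log M_f(r)) / (log r)`, as an extended real number. -/
noncomputable def entireOrder (f : ℂ → ℂ) : EReal :=
  Filter.limsup
    (fun r : ℝ => ((Real.log (Real.log (maxModulus f r)) / Real.log r : ℝ) : EReal))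
    Filter.atTop

/-!
If `f` had only finitely many zeros, then `f = P * exp g` with `P` a polynomial and `g` entire.
Since the order of `f` is below some `σ < 1`, `Re g z ≤ ‖z‖ ^ σ` far out, so by
Borel–Carathéodory `g` grows sublinearly and, by Cauchy's estimate, is constant.
But then `f = c * P` has polynomial growth, hence order `0`, contradicting `ρ > 0`.
-/

open Bornology Asymptotics Metric

section MaxModulus

variable {f : ℂ → ℂ} {r : ℝ}

lemma norm_le_maxModulus (hf : Continuous f) (z : ℂ) : ‖f z‖ ≤ maxModulus f ‖z‖ :=
  le_csSup ((isCompact_sphere 0 ‖z‖).image (continuous_norm.comp hf)).bddAbove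
    ⟨z, by simp, rfl⟩

lemma maxModulus_le {C : ℝ} (hr : 0 ≤ r) (h : ∀ z : ℂ, ‖z‖ = r → ‖f z‖ ≤ C) :
    maxModulus f r ≤ C :=
  csSup_le ((NormedSpace.sphere_nonempty.2 hr).image _) <| by
    rintro _ ⟨z, hz, rfl⟩
    exact h z (by simpa using hz)

lemma eventually_maxModulus_le {u : ℝ → ℝ} (h : ∀ᶠ z in cobounded ℂ, ‖f z‖ ≤ u ‖z‖) :
    ∀ᶠ r in atTop, maxModulus f r ≤ u r := by
  obtain ⟨R, -, hR⟩ := hasBasis_cobounded_norm.eventually_iff.1 h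
  filter_upwards [eventually_ge_atTop (max R 0)] with r hr
  refine maxModulus_le (le_of_max_le_right hr) fun z hz => ?_
  have := hR (show R ≤ ‖z‖ by rw [hz]; exact le_of_max_le_left hr)
  rwa [hz] at this

lemma eventually_le_maxModulus (hf : Continuous f) {u : ℝ → ℝ}
    (h : ∀ᶠ z in cobounded ℂ, u ‖z‖ ≤ ‖f z‖) : ∀ᶠ r in atTop, u r ≤ maxModulus f r := by
  obtain ⟨R, -, hR⟩ := hasBasis_cobounded_norm.eventually_iff.1 h
  filter_upwards [eventually_ge_atTop (max R 0)] with r hr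
  have hr' : ‖(r : ℂ)‖ = r := by simp [abs_of_nonneg (le_of_max_le_right hr)]
  have := (hR (show R ≤ ‖(r : ℂ)‖ by rw [hr']; exact le_of_max_le_left hr)).trans
    (norm_le_maxModulus hf (r : ℂ))
  rwa [hr'] at this

end MaxModulus

section EntireOrder

variable {f : ℂ → ℂ}

lemma eventually_maxModulus_le_exp_rpow {σ : ℝ} (h : entireOrder f < σ) :
    ∀ᶠ r in atTop, maxModulus f r ≤ Real.exp (r ^ σ) := by
  filter_upwards [eventually_lt_of_limsup_lt h, eventually_gt_atTop 1] with r hr hr1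
  rw [EReal.coe_lt_coe_iff, div_lt_iff₀ (Real.log_pos hr1)] at hr
  by_contra! hM
  have hlog : r ^ σ < Real.log (maxModulus f r) :=
    (Real.lt_log_iff_exp_lt ((Real.exp_pos _).trans hM)).2 hM
  have := Real.log_lt_log (by positivity) hlog
  rw [Real.log_rpow (by linarith)] at this
  linarith

lemma entireOrder_le_of_abs_log_maxModulus_le {σ : ℝ} (hσ : 0 ≤ σ)
    (h : ∀ᶠ r in atTop, |Real.log (maxModulus f r)| ≤ r ^ σ) : entireOrder f ≤ σ := by
  refine limsup_le_of_le (by isBoundedDefault) ?_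
  filter_upwards [h, eventually_gt_atTop 1] with r hr hr1
  rw [EReal.coe_le_coe_iff, div_le_iff₀ (Real.log_pos hr1), ← Real.log_rpow (by linarith)]
  have hlog : Real.log (Real.log (maxModulus f r)) = Real.log |Real.log (maxModulus f r)| :=
    (Real.log_abs _).symm
  -- `Real.log` is even and `Real.log 0 = 0`, so no sign condition on `log M` is needed.
  rcases (abs_nonneg (Real.log (maxModulus f r))).eq_or_lt with h0 | hpos
  · rw [hlog, ← h0, Real.log_zero]
    exact Real.log_nonneg (Real.one_le_rpow hr1.le hσ)
  · exact hlog ▸ Real.log_le_log hpos hr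

lemma entireOrder_nonpos_of_norm_le_pow (hf : Continuous f) {a b : ℝ} {n : ℕ} (ha : 0 < a)
    (h : ∀ᶠ z in cobounded ℂ, a ≤ ‖f z‖ ∧ ‖f z‖ ≤ b * ‖z‖ ^ n) : entireOrder f ≤ 0 := by
  refine EReal.le_of_forall_lt_iff_le.1 fun τ hτ => ?_
  replace hτ : (0 : ℝ) < τ := by exact_mod_cast hτ
  have hsmall : (fun r => |Real.log a| + |Real.log b| + n * Real.log r) =o[atTop] (· ^ τ) :=
    (isLittleO_const_left.2 <| .inr <| tendsto_norm_atTop_atTop.comp (tendsto_rpow_atTop hτ)).add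
      ((isLittleO_log_rpow_atTop hτ).const_mul_left _)
  refine entireOrder_le_of_abs_log_maxModulus_le hτ.le ?_
  filter_upwards [eventually_le_maxModulus hf (u := fun _ => a) (h.mono fun _ => And.left),
    eventually_maxModulus_le (u := fun r => b * r ^ n) (h.mono fun _ => And.right),
    hsmall.bound one_pos, eventually_ge_atTop 1] with r hlo hhi hsm hr1
  have hM : 0 < maxModulus f r := ha.trans_le hlo
  have hb : 0 < b := pos_of_mul_pos_left (hM.trans_le hhi) (by positivity)
  have hlog_lo : Real.log a ≤ Real.log (maxModulus f r) := Real.log_le_log ha hlo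
  have hlog_hi : Real.log (maxModulus f r) ≤ Real.log b + n * Real.log r := by
    rw [← Real.log_pow, ← Real.log_mul hb.ne' (by positivity)]
    exact Real.log_le_log hM hhi
  have hlog_r : 0 ≤ n * Real.log r := by have := Real.log_nonneg hr1; positivity
  rw [one_mul, Real.norm_of_nonneg (by positivity),
    Real.norm_of_nonneg (Real.rpow_nonneg (by linarith) _)] at hsm
  refine (abs_le.2 ⟨?_, ?_⟩).trans hsm <;>
    linarith [neg_abs_le (Real.log a), le_abs_self (Real.log b), abs_nonneg (Real.log a),
      abs_nonneg (Real.log b)]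

end EntireOrder

lemma exists_forall_le_add_of_eventually_le {E : Type*} [NormedAddCommGroup E] [ProperSpace E]
    {u v : E → ℝ} (hu : Continuous u) (hv : ∀ x, 0 ≤ v x) (h : ∀ᶠ x in cobounded E, u x ≤ v x) :
    ∃ C, 0 ≤ C ∧ ∀ x, u x ≤ C + v x := by
  obtain ⟨R, -, hR⟩ := hasBasis_cobounded_norm.eventually_iff.1 h
  obtain ⟨C, hC⟩ := (isCompact_closedBall (0 : E) R).exists_bound_of_continuousOn hu.continuousOn
  refine ⟨max C 0, le_max_right _ _, fun x => ?_⟩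
  rcases le_total R ‖x‖ with hx | hx
  · linarith [hR hx, le_max_right C 0]
  · have := hC x (mem_closedBall_zero_iff.2 hx)
    linarith [le_abs_self (u x), le_max_left C 0, hv x, Real.norm_eq_abs (u x)]

lemma isLittleO_rpow_id_atTop {σ : ℝ} (hσ : σ < 1) : (fun x : ℝ => x ^ σ) =o[atTop] id := by
  refine (isLittleO_iff_tendsto' ?_).2 ?_
  · filter_upwards [eventually_gt_atTop 0] with x hx h
    exact absurd h hx.ne'
  · refine (tendsto_rpow_neg_atTop (sub_pos.2 hσ)).congr' ?_
    filter_upwards [eventually_gt_atTop 0] with x hx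
    rw [neg_sub, Real.rpow_sub_one hx.ne']
    rfl

lemma Differentiable.apply_eq_apply_of_isLittleO_id {f : ℂ → ℂ} (hf : Differentiable ℂ f)
    (h : f =o[cobounded ℂ] id) (z w : ℂ) : f z = f w := by
  refine is_const_of_deriv_eq_zero hf (fun z₀ => norm_le_zero_iff.1 ?_) z w
  refine le_of_forall_pos_le_add fun ε hε => ?_
  obtain ⟨R, -, hR⟩ := hasBasis_cobounded_norm.eventually_iff.1 (h.bound (half_pos hε))
  obtain ⟨ρ, hρ_def⟩ : ∃ ρ, ρ = max R 0 + ‖z₀‖ + 1 := ⟨_, rfl⟩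
  have hρ : 0 < ρ := by rw [hρ_def]; positivity
  have hsphere : ∀ w ∈ sphere z₀ ρ, ‖f w‖ ≤ ε / 2 * (2 * ρ) := by
    intro w hw
    rw [mem_sphere_iff_norm] at hw
    have h₁ : ‖w - z₀‖ ≤ ‖w‖ + ‖z₀‖ := norm_sub_le _ _
    have h₂ : ‖w‖ ≤ ‖w - z₀‖ + ‖z₀‖ := norm_le_norm_sub_add _ _
    refine (hR (show R ≤ ‖w‖ by linarith [le_max_left R 0])).trans ?_
    gcongr
    simp only [id]
    linarith [le_max_right R 0]
  refine (Complex.norm_deriv_le_of_forall_mem_sphere_norm_le hρ hf.diffContOnCl hsphere).trans_eq ?_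
  field_simp
  ring

/-- Borel–Carathéodory on the disc of radius `2‖z‖` turns the one-sided bound on `Re f` into
`‖f z‖ = O(‖z‖ ^ σ)`. -/
lemma Differentiable.isLittleO_id_of_re_le_rpow {f : ℂ → ℂ} (hf : Differentiable ℂ f) {σ : ℝ}
    (hσ0 : 0 ≤ σ) (hσ1 : σ < 1) (h : ∀ᶠ z in cobounded ℂ, (f z).re ≤ ‖z‖ ^ σ) :
    f =o[cobounded ℂ] id := by
  obtain ⟨C, hC0, hC⟩ := exists_forall_le_add_of_eventually_le
    (Complex.continuous_re.comp hf.continuous) (fun z => Real.rpow_nonneg (norm_nonneg z) σ) h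
  have hbound : ∀ z : ℂ, z ≠ 0 → ‖f z‖ ≤ 2 * C + 3 * ‖f 0‖ + 2 * 2 ^ σ * ‖z‖ ^ σ := by
    intro z hz
    have hz0 : 0 < ‖z‖ := norm_pos_iff.2 hz
    have hBC := Complex.borelCaratheodory (M := C + (2 * ‖z‖) ^ σ) (R := 2 * ‖z‖) (by positivity)
      hf.differentiableOn (fun w hw => ?_) (by positivity) (by rw [mem_ball_zero_iff]; linarith)
    · rw [Real.mul_rpow zero_le_two hz0.le] at hBC
      convert hBC using 1
      field_simp
      ring
    · rw [mem_ball_zero_iff] at hw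
      have : ‖w‖ ^ σ ≤ (2 * ‖z‖) ^ σ := Real.rpow_le_rpow (norm_nonneg w) hw.le hσ0
      exact (hC w).trans (by linarith)
  have hsublinear :
      (fun z : ℂ => 2 * C + 3 * ‖f 0‖ + 2 * 2 ^ σ * ‖z‖ ^ σ) =o[cobounded ℂ] id := by
    refine isLittleO_norm_right (g' := (id : ℂ → ℂ)).1 ?_
    exact ((isLittleO_const_id_atTop _).add ((isLittleO_rpow_id_atTop hσ1).const_mul_left _))
      |>.comp_tendsto (tendsto_norm_cobounded_atTop (E := ℂ))
  refine IsBigO.trans_isLittleO (IsBigO.of_bound 1 ?_) hsublinear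
  filter_upwards [eventually_cobounded_le_norm 1] with z hz
  rw [one_mul, Real.norm_of_nonneg (by positivity)]
  exact hbound z (norm_pos_iff.1 (by linarith))

lemma Differentiable.exists_eq_exp_comp {f : ℂ → ℂ} (hf : Differentiable ℂ f)
    (hf0 : ∀ z, f z ≠ 0) :
    ∃ g : ℂ → ℂ, Differentiable ℂ g ∧ f = Complex.exp ∘ g := by
  obtain ⟨g, hg0, hg⟩ :=
    (hf.deriv.div hf hf0).isExactOn_univ.with_val_at 0 (Complex.log (f 0))
  have hg' := fun z => hg z trivial
  -- `g' = f' / f` makes `f * exp (-g)` constant, and `g 0 = log (f 0)` makes the constant `1`.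
  have hconst : ∀ z, f z * Complex.exp (-g z) = f 0 * Complex.exp (-g 0) := by
    refine fun z => is_const_of_deriv_eq_zero (f := fun z => f z * Complex.exp (-g z))
      (fun z => (hf z).mul (hg' z).differentiableAt.neg.cexp) (fun z => ?_) z 0
    refine ((hf z).hasDerivAt.mul (hg' z).neg.cexp).deriv.trans ?_
    rw [Pi.div_apply]
    field_simp [hf0 z]
    ring
  refine ⟨g, fun z => (hg' z).differentiableAt, funext fun z => ?_⟩
  have := hconst z
  rw [hg0, Complex.exp_neg, Complex.exp_neg, Complex.exp_log (hf0 0), mul_inv_cancel₀ (hf0 0),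
    mul_inv_eq_one₀ (Complex.exp_ne_zero _)] at this
  exact this

lemma Differentiable.exists_eq_pow_mul {f : ℂ → ℂ} (hf : Differentiable ℂ f) (hf0 : f ≠ 0)
    (a : ℂ) :
    ∃ (n : ℕ) (g : ℂ → ℂ), Differentiable ℂ g ∧ g a ≠ 0 ∧ ∀ z, f z = (z - a) ^ n * g z := by
  have hfin : analyticOrderAt f a ≠ ⊤ := fun h =>
    hf0 ((AnalyticOnNhd.analyticOrderAt_eq_top_iff_eq_zero a hf.analyticAt).1 h)
  obtain ⟨g₀, hg₀, hg₀a, hfg₀⟩ :=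
    (hf.analyticAt a).analyticOrderAt_eq_natCast.1 (Nat.cast_analyticOrderNatAt hfin).symm
  set n := analyticOrderNatAt f a
  set g := Function.update (fun z => f z / (z - a) ^ n) a (g₀ a)
  have hg_ne : ∀ z ≠ a, g z = f z / (z - a) ^ n := fun z hz => Function.update_of_ne hz _ _
  have hg_near : g =ᶠ[nhds a] g₀ := by
    filter_upwards [hfg₀] with z hz
    rcases eq_or_ne z a with rfl | hza
    · simp [g]
    · rw [hg_ne z hza, hz, smul_eq_mul,
        mul_div_cancel_left₀ _ (pow_ne_zero _ (sub_ne_zero.2 hza))]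
  refine ⟨n, g, fun z => ?_, by simpa [g] using hg₀a, fun z => ?_⟩
  · rcases eq_or_ne z a with rfl | hza
    · exact hg₀.differentiableAt.congr_of_eventuallyEq hg_near
    · refine ((hf z).div ((differentiableAt_id.sub_const a).pow n)
        (pow_ne_zero _ (sub_ne_zero.2 hza))).congr_of_eventuallyEq ?_
      filter_upwards [isOpen_ne.mem_nhds hza] with w hw using hg_ne w hw
  · rcases eq_or_ne z a with rfl | hza
    · simpa [g] using hfg₀.self_of_nhds
    · rw [hg_ne z hza, mul_div_cancel₀ _ (pow_ne_zero _ (sub_ne_zero.2 hza))]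

lemma Differentiable.exists_eq_multiset_prod_mul {f : ℂ → ℂ} (hf : Differentiable ℂ f)
    (hf0 : f ≠ 0) (hfin : {z | f z = 0}.Finite) :
    ∃ (s : Multiset ℂ) (h : ℂ → ℂ), Differentiable ℂ h ∧ (∀ z, h z ≠ 0) ∧
      ∀ z, f z = (s.map fun a => z - a).prod * h z := by
  classical
  suffices key : ∀ (S : Finset ℂ) (f : ℂ → ℂ), Differentiable ℂ f → f ≠ 0 →
      (∀ z, f z = 0 → z ∈ S) → ∃ (s : Multiset ℂ) (h : ℂ → ℂ), Differentiable ℂ h ∧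
        (∀ z, h z ≠ 0) ∧ ∀ z, f z = (s.map fun a => z - a).prod * h z from
    key hfin.toFinset f hf hf0 fun z hz => hfin.mem_toFinset.2 hz
  intro S
  induction S using Finset.induction_on with
  | empty => exact fun f hf _ hS => ⟨0, f, hf, fun z hz => by simpa using hS z hz, by simp⟩
  | insert a S _ ih =>
    intro f hf hf0 hS
    obtain ⟨n, g, hg, hga, hfg⟩ := hf.exists_eq_pow_mul hf0 a
    have hgS : ∀ z, g z = 0 → z ∈ S := by
      intro z hz
      have hza : z ≠ a := by rintro rfl; exact hga hz
      simpa [hza] using hS z (by simp [hfg z, hz])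
    obtain ⟨s, h, hh, hh0, hgh⟩ := ih g hg (fun h => hga (by simp [h])) hgS
    refine ⟨Multiset.replicate n a + s, h, hh, hh0, fun z => ?_⟩
    simp [hfg z, hgh z, mul_assoc]

lemma eventually_norm_prod_sub_mem_Icc (s : Multiset ℂ) :
    ∀ᶠ z in cobounded ℂ,
      ‖(s.map fun a => z - a).prod‖ ∈ Set.Icc 1 ((2 * ‖z‖) ^ Multiset.card s) := by
  classical
  have hfar : ∀ᶠ z in cobounded ℂ, ∀ a ∈ s.toFinset, ‖a‖ + 1 ≤ ‖z‖ :=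
    (eventually_all_finset _).2 fun a _ => eventually_cobounded_le_norm _
  filter_upwards [hfar] with z hz
  have hfactor : ∀ x ∈ s.map fun a => z - a, 1 ≤ normHom x ∧ normHom x ≤ 2 * ‖z‖ := by
    simp only [Multiset.mem_map, forall_exists_index, and_imp]
    rintro _ a ha rfl
    have := hz a (Multiset.mem_toFinset.2 ha)
    constructor <;> simp only [normHom_apply] <;>
      linarith [norm_sub_norm_le z a, norm_sub_le z a]
  rw [← normHom_apply (Multiset.prod _), map_multiset_prod,
    ← Multiset.card_map (fun a => z - a) s]
  exact ⟨Multiset.one_le_prod_map fun x hx => (hfactor x hx).1,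
    Multiset.prod_map_le_pow_card (fun x _ => norm_nonneg x) fun x hx => (hfactor x hx).2⟩

theorem Differentiable.entireOrder_nonpos_of_finite_zeros {f : ℂ → ℂ} (hf : Differentiable ℂ f)
    (hfin : {z | f z = 0}.Finite) (hord : entireOrder f < 1) : entireOrder f ≤ 0 := by
  have hf0 : f ≠ 0 := fun h => Set.infinite_univ (by simpa [h] using hfin)
  obtain ⟨s, h, hh, hh0, hfac⟩ := hf.exists_eq_multiset_prod_mul hf0 hfin
  obtain ⟨g, hg, rfl⟩ := hh.exists_eq_exp_comp hh0
  obtain ⟨σ, hσ, hσ1⟩ := EReal.lt_iff_exists_real_btwn.1 (max_lt hord zero_lt_one)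
  have hσ0 : 0 < σ := by exact_mod_cast (le_max_right _ _).trans_lt hσ
  replace hσ1 : σ < 1 := by exact_mod_cast hσ1
  have hgrowth : ∀ᶠ z in cobounded ℂ, ‖f z‖ ≤ Real.exp (‖z‖ ^ σ) :=
    (tendsto_norm_cobounded_atTop.eventually
      (eventually_maxModulus_le_exp_rpow ((le_max_left _ _).trans_lt hσ))).mono
      fun z hz => (norm_le_maxModulus hf.continuous z).trans hz
  have hre : ∀ᶠ z in cobounded ℂ, (g z).re ≤ ‖z‖ ^ σ := by
    filter_upwards [hgrowth, eventually_norm_prod_sub_mem_Icc s] with z hz hP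
    rw [hfac, norm_mul, Function.comp_apply, Complex.norm_exp] at hz
    exact Real.exp_le_exp.1 ((le_mul_of_one_le_left (Real.exp_pos _).le hP.1).trans hz)
  have hconst := hg.apply_eq_apply_of_isLittleO_id (hg.isLittleO_id_of_re_le_rpow hσ0.le hσ1 hre)
  set c := ‖Complex.exp (g 0)‖
  refine entireOrder_nonpos_of_norm_le_pow hf.continuous (a := c) (b := c * 2 ^ Multiset.card s)
    (n := Multiset.card s) (norm_pos_iff.2 (Complex.exp_ne_zero _)) ?_
  filter_upwards [eventually_norm_prod_sub_mem_Icc s] with z hP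
  rw [hfac, norm_mul, Function.comp_apply, hconst z 0, mul_comm]
  refine ⟨le_mul_of_one_le_right (norm_nonneg _) hP.1, ?_⟩
  rw [mul_assoc, ← mul_pow]
  exact mul_le_mul_of_nonneg_left hP.2 (norm_nonneg _)

/-- An entire function of order `ρ` with `0 < ρ < 1` has infinitely
many zeros. -/
theorem infinitely_many_zeros_of_small_positive_order (f : ℂ → ℂ)
    (hf : Differentiable ℂ f) (ρ : ℝ) (hord : entireOrder f = (ρ : EReal))
    (h0 : 0 < ρ) (h1 : ρ < 1) :
    {w : ℂ | f w = 0}.Infinite := by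
  intro hfin
  have := hf.entireOrder_nonpos_of_finite_zeros hfin (hord ▸ EReal.coe_lt_coe_iff.2 h1)
  rw [hord, EReal.coe_nonpos] at this
  linarith
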